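/- arXiv:0910.4046 — 3 statements merged into one kernel-verified Lean document; each statement's English description precedes it below -/
import Mathlib

section
/- With K_n^l as in the standard setup, for all n ≥ 1: K_n^3 = K_{n+5} − (3n+8) K_{n+3}. -/
/-- Bernoulli–Euler numbers: Taylor coefficients at `0` of `sec t + tan t`. -/
noncomputable def bernoulliEuler (n : ℕ) : ℝ :=
  iteratedDeriv n (fun t : ℝ => 1 / Real.cos t + Real.tan t) 0

/-- `K_n^3 = K_{n+5} - (3n+8) K_{n+3}` for all `n ≥ 1`. -/
theorem K_three_boundary_points (K : ℤ → ℕ → ℝ)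
    (hb0 : ∀ n : ℤ, 1 ≤ n → K n 0 = bernoulliEuler (n - 1).toNat)
    (hb1 : ∀ n : ℤ, 1 ≤ n → K n 1 = bernoulliEuler (n + 1).toNat)
    (hrec : ∀ (n : ℤ) (l : ℕ), 2 ≤ n → 1 ≤ l →
      K (n - 2) (l + 1) = K n l - (n : ℝ) * l * K n (l - 1)) :
    ∀ n : ℤ, 1 ≤ n →
      K n 3 = bernoulliEuler (n + 5).toNat - (3 * (n : ℝ) + 8) * bernoulliEuler (n + 3).toNat := by
  intro n hn
  have h1 := hrec (n + 2) 2 (by omega) (by omega)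
  have h2 := hrec (n + 4) 1 (by omega) (by omega)
  have e1 : n + 2 - 2 = n := by ring
  have e2 : n + 4 - 2 = n + 2 := by ring
  rw [e1] at h1; rw [e2] at h2
  have b1 := hb1 (n + 2) (by omega)
  have b2 := hb1 (n + 4) (by omega)
  have b3 := hb0 (n + 4) (by omega)
  have t1 : (n + 2 + 1).toNat = (n + 3).toNat := by omega
  have t2 : (n + 4 + 1).toNat = (n + 5).toNat := by omega
  have t3 : (n + 4 - 1).toNat = (n + 3).toNat := by omega
  rw [t1] at b1; rw [t2] at b2; rw [t3] at b3
  rw [h1, h2, b1, b2, b3]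
  push_cast
  ring
end

section
/- With K_n^l as in the standard setup, for all n ≥ 1: K_n^4 = K_{n+7} − (6n+20) K_{n+5} + 3(n+2)(n+4) K_{n+3}. -/
/-- `K_n^4 = K_{n+7} - (6n+20) K_{n+5} + 3(n+2)(n+4) K_{n+3}` for all `n ≥ 1`. -/
theorem K_four_boundary_points (K : ℤ → ℕ → ℝ)
    (hb0 : ∀ n : ℤ, 1 ≤ n → K n 0 = bernoulliEuler (n - 1).toNat)
    (hb1 : ∀ n : ℤ, 1 ≤ n → K n 1 = bernoulliEuler (n + 1).toNat)
    (hrec : ∀ (n : ℤ) (l : ℕ), 2 ≤ n → 1 ≤ l →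
      K (n - 2) (l + 1) = K n l - (n : ℝ) * l * K n (l - 1)) :
    ∀ n : ℤ, 1 ≤ n →
      K n 4 = bernoulliEuler (n + 7).toNat - (6 * (n : ℝ) + 20) * bernoulliEuler (n + 5).toNat
        + 3 * ((n : ℝ) + 2) * ((n : ℝ) + 4) * bernoulliEuler (n + 3).toNat := by
  intro n hn
  have e3 := hrec (n + 2) 3 (by linarith) (by norm_num)
  have f2 := hrec (n + 4) 2 (by linarith) (by norm_num)
  have f1 := hrec (n + 4) 1 (by linarith) le_rfl
  have g1 := hrec (n + 6) 1 (by linarith) le_rfl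
  have b0 := hb0 (n + 4) (by linarith)
  have b1 := hb1 (n + 4) (by linarith)
  have c0 := hb0 (n + 6) (by linarith)
  have c1 := hb1 (n + 6) (by linarith)
  simp only [show n + 4 - 1 = n + 3 from by ring, show n + 4 + 1 = n + 5 from by ring] at b0 b1
  simp only [show n + 6 - 1 = n + 5 from by ring, show n + 6 + 1 = n + 7 from by ring] at c0 c1
  rw [show n + 2 - 2 = n from by ring] at e3
  rw [show n + 4 - 2 = n + 2 from by ring] at f1 f2
  rw [show n + 6 - 2 = n + 4 from by ring] at g1
  norm_num at e3 f1 f2 g1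
  rw [b0, b1] at f1
  rw [b1] at f2
  rw [c0, c1] at g1
  linear_combination e3 + f2 + g1 - 3 * ((n : ℝ) + 2) * f1
end

section
/- Let K(t) = sec t + tan t. Then K'''(t) − (t·K(t))'' = (3 sin t − t cos t)/(1 − sin t)², as functions on the domain where cos t ≠ 0. This is the exponential generating function of the numbers K_n^2 = K_{n+3} − (n+2)K_{n+1}. -/
/-!
Where `cos t ≠ 0` we have `sin t ≠ 1` and `sec t + tan t = cos t / (1 - sin t)`, and this
expression differentiates cleanly: for `K = cos / (1 - sin)` one gets `K' = (1 - sin)⁻¹`,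
`K'' = cos / (1 - sin)²`, `K''' = (2 + sin) / (1 - sin)²` and `(t K)'' = 2 K' + t K''`,
whose difference is `(3 sin t - t cos t) / (1 - sin t)²`. Iterated derivatives at `t` only
see a neighbourhood of `t`, so the junk values of `1 / cos` and `tan` at the zeros of `cos`
do not matter.
-/

open Real Filter Topology

theorem iteratedDeriv_succ_eq_of_hasDerivAt {𝕜 F : Type*} [NontriviallyNormedField 𝕜]
    [NormedAddCommGroup F] [NormedSpace 𝕜 F] {f f' : 𝕜 → F} {U : Set 𝕜} (hU : IsOpen U)
    (hf : ∀ y ∈ U, HasDerivAt f (f' y) y) (n : ℕ) {x : 𝕜} (hx : x ∈ U) :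
    iteratedDeriv (n + 1) f x = iteratedDeriv n f' x := by
  rw [iteratedDeriv_succ']
  refine EventuallyEq.iteratedDeriv_eq n ?_
  filter_upwards [hU.mem_nhds hx] with y hy using (hf y hy).deriv

lemma isOpen_setOf_sin_ne_one : IsOpen {x : ℝ | sin x ≠ 1} :=
  isOpen_ne_fun continuous_sin continuous_const

lemma sin_ne_one_of_cos_ne_zero {x : ℝ} (hx : cos x ≠ 0) : sin x ≠ 1 := by
  intro h
  have := sin_sq_add_cos_sq x
  rw [h] at this
  exact hx (by nlinarith)

lemma one_div_cos_add_tan {x : ℝ} (hx : cos x ≠ 0) :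
    1 / cos x + tan x = cos x / (1 - sin x) := by
  have := sub_ne_zero.mpr (sin_ne_one_of_cos_ne_zero hx).symm
  rw [tan_eq_sin_div_cos, ← add_div, div_eq_div_iff hx this]
  linear_combination -sin_sq_add_cos_sq x

lemma hasDerivAt_cos_div_one_sub_sin {x : ℝ} (hx : sin x ≠ 1) :
    HasDerivAt (fun y => cos y / (1 - sin y)) (1 - sin x)⁻¹ x := by
  have h : 1 - sin x ≠ 0 := sub_ne_zero.mpr hx.symm
  refine ((hasDerivAt_cos x).div ((hasDerivAt_sin x).const_sub 1) h).congr_deriv ?_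
  field_simp
  linear_combination sin_sq_add_cos_sq x

lemma hasDerivAt_inv_one_sub_sin {x : ℝ} (hx : sin x ≠ 1) :
    HasDerivAt (fun y => (1 - sin y)⁻¹) (cos x / (1 - sin x) ^ 2) x := by
  refine (((hasDerivAt_sin x).const_sub 1).inv (sub_ne_zero.mpr hx.symm)).congr_deriv ?_
  ring

lemma hasDerivAt_cos_div_one_sub_sin_sq {x : ℝ} (hx : sin x ≠ 1) :
    HasDerivAt (fun y => cos y / (1 - sin y) ^ 2) ((2 + sin x) / (1 - sin x) ^ 2) x := by
  have h : 1 - sin x ≠ 0 := sub_ne_zero.mpr hx.symm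
  refine ((hasDerivAt_cos x).div (((hasDerivAt_sin x).const_sub 1).pow 2)
    (pow_ne_zero 2 h)).congr_deriv ?_
  simp only [Pi.pow_apply]
  field_simp
  linear_combination (2 * (1 - sin x)) * sin_sq_add_cos_sq x

lemma iteratedDeriv_three_cos_div_one_sub_sin {x : ℝ} (hx : sin x ≠ 1) :
    iteratedDeriv 3 (fun y => cos y / (1 - sin y)) x = (2 + sin x) / (1 - sin x) ^ 2 := by
  have hU := isOpen_setOf_sin_ne_one
  rw [iteratedDeriv_succ_eq_of_hasDerivAt hU (fun _ ↦ hasDerivAt_cos_div_one_sub_sin) 2 hx,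
    iteratedDeriv_succ_eq_of_hasDerivAt hU (fun _ ↦ hasDerivAt_inv_one_sub_sin) 1 hx,
    iteratedDeriv_succ_eq_of_hasDerivAt hU (fun _ ↦ hasDerivAt_cos_div_one_sub_sin_sq) 0 hx,
    iteratedDeriv_zero]

lemma iteratedDeriv_two_mul_cos_div_one_sub_sin {x : ℝ} (hx : sin x ≠ 1) :
    iteratedDeriv 2 (fun y => y * (cos y / (1 - sin y))) x
      = 2 * (1 - sin x)⁻¹ + x * (cos x / (1 - sin x) ^ 2) := by
  have hU := isOpen_setOf_sin_ne_one
  have hd : ∀ y ∈ {y : ℝ | sin y ≠ 1}, HasDerivAt (fun y => y * (cos y / (1 - sin y)))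
      (cos y / (1 - sin y) + y * (1 - sin y)⁻¹) y := fun y hy ↦
    ((hasDerivAt_id y).mul (hasDerivAt_cos_div_one_sub_sin hy)).congr_deriv
      (by simp only [one_mul, id_eq])
  have hd' : ∀ y ∈ {y : ℝ | sin y ≠ 1},
      HasDerivAt (fun y => cos y / (1 - sin y) + y * (1 - sin y)⁻¹)
        (2 * (1 - sin y)⁻¹ + y * (cos y / (1 - sin y) ^ 2)) y := fun y hy ↦
    ((hasDerivAt_cos_div_one_sub_sin hy).add
      ((hasDerivAt_id y).mul (hasDerivAt_inv_one_sub_sin hy))).congr_deriv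
      (by simp only [one_mul, id_eq]; ring)
  rw [iteratedDeriv_succ_eq_of_hasDerivAt hU hd 1 hx,
    iteratedDeriv_succ_eq_of_hasDerivAt hU hd' 0 hx, iteratedDeriv_zero]

/-- For `K(t) = sec t + tan t`:
`K'''(t) - (t·K(t))'' = (3 sin t - t cos t)/(1 - sin t)²` wherever `cos t ≠ 0`.
This is the exponential generating function of the numbers `K_n^2 = K_{n+3} - (n+2)K_{n+1}`. -/
theorem egf_K_two_boundary_points :
    ∀ t : ℝ, Real.cos t ≠ 0 →
      iteratedDeriv 3 (fun s : ℝ => 1 / Real.cos s + Real.tan s) t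
        - iteratedDeriv 2 (fun s : ℝ => s * (1 / Real.cos s + Real.tan s)) t
      = (3 * Real.sin t - t * Real.cos t) / (1 - Real.sin t) ^ 2 := by
  intro t ht
  have hK : ∀ᶠ s in 𝓝 t, 1 / cos s + tan s = cos s / (1 - sin s) := by
    filter_upwards [(isOpen_ne_fun continuous_cos continuous_const).mem_nhds ht] with s hs
    exact one_div_cos_add_tan hs
  have hsin := sin_ne_one_of_cos_ne_zero ht
  rw [EventuallyEq.iteratedDeriv_eq 3 hK, iteratedDeriv_three_cos_div_one_sub_sin hsin,
    EventuallyEq.iteratedDeriv_eq 2 (hK.mono fun s ↦ congrArg (s * ·)),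
    iteratedDeriv_two_mul_cos_div_one_sub_sin hsin]
  field_simp [sub_ne_zero.mpr hsin.symm]
  ring
end
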